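/- For every M > 0 there exist μ > 0 and C > 0 such that the following holds. Let c₃, γ ∈ ℝ with |c₃| + |γ| ≤ μ, and let U solve the profile ODE with parameters (c₃, γ) and satisfy sup_{y ∈ (−1,1)} |U(y)| ≤ M(|c₃| + |γ|). Then for all y ∈ (−1,1), |U(y) + (c₃/2) sgn(y) (1−y²) ln(1−y²)| ≤ C (|c₃| + |γ|) (1−y²). -/

import Mathlib

/-!
With `F = U/(1 - y²) + (c₃/2) log(1 - y²)` the profile equation becomes the Riccati equation
`F' = c₃/(1 + y) - (U/(1 - y²))²/2`, where `U/(1 - y²) = F - (c₃/2) log(1 - y²)` has only a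
logarithmic singularity at `y = 1`, whose square is integrable. A barrier comparison therefore keeps
`|F| ≤ 3(|c₃| + |γ|)` on `[0, 1)` when `|c₃| + |γ|` is small; negative `y` follow from the symmetry
`U ↦ -U(-·)`, and in the degenerate case `c₃ = γ = 0` the assumed bound on `|U|` forces `U = 0`.
-/

open Set

def SolvesProfileODE (c₃ γ : ℝ) (U : ℝ → ℝ) : Prop :=
  ContinuousOn U (Icc (-1) 1) ∧
  ContDiffOn ℝ 2 U (Ioo (-1) 1) ∧
  (∀ y ∈ Ioo (-1 : ℝ) 1,
    (1 - y ^ 2) * deriv U y + 2 * y * U y + (1 / 2) * (U y) ^ 2 = c₃ * (1 - y ^ 2)) ∧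
  U 0 = γ

open Real

noncomputable def logSqPrimitive (t : ℝ) : ℝ :=
  2 - (1 - t) * (log (1 - t) ^ 2 - 2 * log (1 - t) + 2)

lemma logSqPrimitive_zero : logSqPrimitive 0 = 0 := by
  norm_num [logSqPrimitive]

lemma hasDerivAt_logSqPrimitive {t : ℝ} (ht : t < 1) :
    HasDerivAt logSqPrimitive (log (1 - t) ^ 2) t := by
  have hlin : HasDerivAt (fun s : ℝ => 1 - s) (-1) t := by
    simpa using (hasDerivAt_id t).const_sub 1
  have hlog : HasDerivAt (fun s : ℝ => log (1 - s)) (-1 / (1 - t)) t :=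
    hlin.log (by linarith)
  have := (hasDerivAt_const t 2).sub
    (hlin.mul (((hlog.pow 2).sub (hlog.const_mul 2)).add_const 2))
  refine this.congr_deriv ?_
  simp only [Pi.sub_apply, Pi.pow_apply]
  field_simp [show 1 - t ≠ 0 by linarith]
  ring

lemma logSqPrimitive_le_two {t : ℝ} (ht : t ≤ 1) : logSqPrimitive t ≤ 2 := by
  have : 0 ≤ (1 - t) * ((log (1 - t) - 1) ^ 2 + 1) := by
    apply mul_nonneg <;> nlinarith
  unfold logSqPrimitive
  nlinarith

lemma abs_log_one_sub_sq_le {t : ℝ} (h0 : 0 ≤ t) (h1 : t < 1) :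
    |log (1 - t ^ 2)| ≤ |log (1 - t)| := by
  have hsplit : log (1 - t ^ 2) = log (1 - t) + log (1 + t) := by
    rw [← log_mul (by linarith) (by linarith)]
    ring_nf
  rw [abs_of_nonpos (log_nonpos (by nlinarith) (by nlinarith)),
    abs_of_nonpos (log_nonpos (by linarith) (by linarith)), hsplit]
  linarith [log_nonneg (by linarith : (1 : ℝ) ≤ 1 + t)]

lemma abs_riccati_lt {ε c F L ℓ x : ℝ} (hε : 0 < ε) (hc : |c| ≤ ε) (hx : 0 ≤ x)
    (hF : |F| ≤ 3 * ε) (hL : |L| ≤ |ℓ|) :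
    |c / (1 + x) - (F - c / 2 * L) ^ 2 / 2| < ε + 10 * ε ^ 2 + ε ^ 2 / 4 * ℓ ^ 2 := by
  have hlin : |c / (1 + x)| ≤ ε := by
    rw [abs_div, abs_of_pos (by linarith : (0 : ℝ) < 1 + x)]
    exact (div_le_self (abs_nonneg c) (by linarith)).trans hc
  have hcL : |c / 2 * L| ≤ ε / 2 * |ℓ| := by
    rw [abs_mul, abs_div, abs_two]
    exact mul_le_mul (by linarith) hL (abs_nonneg L) (by linarith)
  have hV : |F - c / 2 * L| ≤ |F| + ε / 2 * |ℓ| := (abs_sub _ _).trans (by linarith)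
  have hsq : (F - c / 2 * L) ^ 2 / 2 ≤ |F| ^ 2 + ε ^ 2 / 4 * ℓ ^ 2 := by
    have := pow_le_pow_left₀ (abs_nonneg _) hV 2
    rw [sq_abs] at this
    nlinarith [sq_nonneg (|F| - ε / 2 * |ℓ|), sq_abs ℓ]
  have hF2 : |F| ^ 2 < 10 * ε ^ 2 := by nlinarith [abs_nonneg F]
  calc |c / (1 + x) - (F - c / 2 * L) ^ 2 / 2|
      ≤ |c / (1 + x)| + (F - c / 2 * L) ^ 2 / 2 := by
        refine (abs_sub _ _).trans ?_
        rw [abs_of_nonneg (by positivity : (0 : ℝ) ≤ (F - c / 2 * L) ^ 2 / 2)]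
    _ < ε + 10 * ε ^ 2 + ε ^ 2 / 4 * ℓ ^ 2 := by linarith

noncomputable def profileRemainder (c₃ : ℝ) (U : ℝ → ℝ) (y : ℝ) : ℝ :=
  U y / (1 - y ^ 2) + c₃ / 2 * log (1 - y ^ 2)

namespace SolvesProfileODE

variable {c₃ γ : ℝ} {U : ℝ → ℝ}

lemma profileRemainder_zero (hU : SolvesProfileODE c₃ γ U) : profileRemainder c₃ U 0 = γ := by
  simp [profileRemainder, hU.2.2.2]

lemma hasDerivAt_profileRemainder (hU : SolvesProfileODE c₃ γ U) {t : ℝ}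
    (ht : t ∈ Ioo (-1 : ℝ) 1) :
    HasDerivAt (profileRemainder c₃ U) (c₃ / (1 + t) - (U t / (1 - t ^ 2)) ^ 2 / 2) t := by
  obtain ⟨ht₁, ht₂⟩ := ht
  have h1t : (1 : ℝ) - t ^ 2 ≠ 0 := by nlinarith
  have hU' : HasDerivAt U (deriv U t) t :=
    ((hU.2.1.differentiableOn (by norm_num)).differentiableAt
      (isOpen_Ioo.mem_nhds ⟨ht₁, ht₂⟩)).hasDerivAt
  have hw : HasDerivAt (fun s : ℝ => 1 - s ^ 2) (-(2 * t)) t := by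
    simpa using ((hasDerivAt_id t).pow 2).const_sub 1
  have hode := hU.2.2.1 t ⟨ht₁, ht₂⟩
  refine ((hU'.div hw h1t).add ((hw.log h1t).const_mul (c₃ / 2))).congr_deriv ?_
  have h1 : (1 : ℝ) + t ≠ 0 := by linarith
  have h2 : (1 : ℝ) - t ≠ 0 := by linarith
  field_simp
  linear_combination 2 * (1 + t) * hode

lemma reflect (hU : SolvesProfileODE c₃ γ U) : SolvesProfileODE c₃ (-γ) (fun t => -U (-t)) := by
  obtain ⟨hcont, hdiff, hode, h0⟩ := hU
  have hIcc : MapsTo (fun t : ℝ => -t) (Icc (-1) 1) (Icc (-1) 1) :=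
    fun t ht => ⟨by linarith [ht.2], by linarith [ht.1]⟩
  have hIoo : MapsTo (fun t : ℝ => -t) (Ioo (-1) 1) (Ioo (-1) 1) :=
    fun t ht => ⟨by linarith [ht.2], by linarith [ht.1]⟩
  refine ⟨(hcont.comp continuousOn_neg hIcc).neg, (hdiff.comp contDiff_neg.contDiffOn hIoo).neg,
    fun y hy => ?_, by simp [h0]⟩
  have hUd : HasDerivAt U (deriv U (-y)) (-y) :=
    ((hdiff.differentiableOn (by norm_num)).differentiableAt
      (isOpen_Ioo.mem_nhds (hIoo hy))).hasDerivAt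
  have hW : HasDerivAt (fun t => -U (-t)) (-(deriv U (-y) * -1)) y :=
    (hUd.comp y (hasDerivAt_neg y)).neg
  rw [hW.deriv]
  linear_combination hode (-y) (hIoo hy)

/-- Fencing with the barrier `B`: its `log²(1 - t)` term absorbs the square of the logarithmic
part of `U/(1 - t²)`, and its `10ε²` term beats `F² ≤ 9ε²` at a contact point `|F| = B`. -/
lemma abs_profileRemainder_le (hU : SolvesProfileODE c₃ γ U) (hpos : 0 < |c₃| + |γ|)
    (hsmall : |c₃| + |γ| ≤ 1 / 12) {y : ℝ} (hy : y ∈ Ico (0 : ℝ) 1) :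
    |profileRemainder c₃ U y| ≤ 3 * (|c₃| + |γ|) := by
  set ε := |c₃| + |γ|
  have hc₃ : |c₃| ≤ ε := le_add_of_nonneg_right (abs_nonneg γ)
  have hsub : Icc 0 y ⊆ Ioo (-1 : ℝ) 1 := fun t ht => ⟨by linarith [ht.1], ht.2.trans_lt hy.2⟩
  set B : ℝ → ℝ := fun t => ε + (ε + 10 * ε ^ 2) * t + ε ^ 2 / 4 * logSqPrimitive t
  have hB : ∀ t < 1, HasDerivAt B (ε + 10 * ε ^ 2 + ε ^ 2 / 4 * log (1 - t) ^ 2) t := by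
    intro t ht
    refine ((((hasDerivAt_id t).const_mul (ε + 10 * ε ^ 2)).const_add ε).add
      ((hasDerivAt_logSqPrimitive ht).const_mul (ε ^ 2 / 4))).congr_deriv ?_
    ring
  have hBle : ∀ t ∈ Icc 0 y, B t ≤ 3 * ε := by
    intro t ht
    have := logSqPrimitive_le_two (ht.2.trans hy.2.le)
    simp only [B]
    nlinarith [ht.1, ht.2, hy.2, sq_nonneg ε]
  have hcomp := image_norm_le_of_norm_deriv_right_lt_deriv_boundary'
    (fun t ht => (hU.hasDerivAt_profileRemainder (hsub ht)).continuousAt.continuousWithinAt)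
    (fun t ht => (hU.hasDerivAt_profileRemainder (hsub (Ico_subset_Icc_self ht))).hasDerivWithinAt)
    (by simp [B, logSqPrimitive_zero, hU.profileRemainder_zero, ε])
    (fun t ht => (hB t (ht.2.trans_lt hy.2)).continuousAt.continuousWithinAt)
    (fun t ht => (hB t (ht.2.trans hy.2)).hasDerivWithinAt)
    (fun t ht hcontact => by
      have ht' := Ico_subset_Icc_self ht
      have hV : U t / (1 - t ^ 2) = profileRemainder c₃ U t - c₃ / 2 * log (1 - t ^ 2) := by
        simp [profileRemainder]
      rw [norm_eq_abs, hV]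
      rw [norm_eq_abs] at hcontact
      exact abs_riccati_lt hpos hc₃ ht.1 (hcontact ▸ hBle t ht')
        (abs_log_one_sub_sq_le ht.1 (ht.2.trans hy.2)))
    ⟨hy.1, le_rfl⟩
  exact hcomp.trans (hBle y ⟨hy.1, le_rfl⟩)

lemma abs_add_mul_log_le (hU : SolvesProfileODE c₃ γ U) (hpos : 0 < |c₃| + |γ|)
    (hsmall : |c₃| + |γ| ≤ 1 / 12) {y : ℝ} (hy : y ∈ Ico (0 : ℝ) 1) :
    |U y + c₃ / 2 * (1 - y ^ 2) * log (1 - y ^ 2)| ≤ 3 * (|c₃| + |γ|) * (1 - y ^ 2) := by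
  have hw : 0 < 1 - y ^ 2 := by nlinarith [hy.1, hy.2]
  have hid : U y + c₃ / 2 * (1 - y ^ 2) * log (1 - y ^ 2)
      = (1 - y ^ 2) * profileRemainder c₃ U y := by
    simp only [profileRemainder]
    field_simp
  rw [hid, abs_mul, abs_of_pos hw, mul_comm]
  exact mul_le_mul_of_nonneg_right (hU.abs_profileRemainder_le hpos hsmall hy) hw.le

lemma abs_add_sign_mul_log_le (hU : SolvesProfileODE c₃ γ U) (hpos : 0 < |c₃| + |γ|)
    (hsmall : |c₃| + |γ| ≤ 1 / 12) {y : ℝ} (hy : y ∈ Ioo (-1 : ℝ) 1) :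
    |U y + c₃ / 2 * sign y * (1 - y ^ 2) * log (1 - y ^ 2)|
      ≤ 3 * (|c₃| + |γ|) * (1 - y ^ 2) := by
  rcases lt_trichotomy y 0 with hneg | rfl | hpos'
  · have h := hU.reflect.abs_add_mul_log_le (by rwa [abs_neg]) (by rwa [abs_neg])
      (⟨by linarith, by linarith [hy.1]⟩ : -y ∈ Ico (0 : ℝ) 1)
    rw [neg_neg, neg_sq, abs_neg] at h
    rw [sign_of_neg hneg, ← abs_neg]
    convert h using 2
    ring
  · simpa using hU.abs_add_mul_log_le hpos hsmall ⟨le_rfl, one_pos⟩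
  · simpa [sign_of_pos hpos'] using hU.abs_add_mul_log_le hpos hsmall ⟨hpos'.le, hy.2⟩

end SolvesProfileODE

theorem stmt5 (M : ℝ) :
    ∃ μ > 0, ∃ C > 0, ∀ c₃ γ : ℝ, |c₃| + |γ| ≤ μ →
      ∀ U : ℝ → ℝ, SolvesProfileODE c₃ γ U →
        (∀ y ∈ Ioo (-1 : ℝ) 1, |U y| ≤ M * (|c₃| + |γ|)) →
        ∀ y ∈ Ioo (-1 : ℝ) 1,
          |U y + (c₃ / 2) * Real.sign y * (1 - y ^ 2) * Real.log (1 - y ^ 2)|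
            ≤ C * (|c₃| + |γ|) * (1 - y ^ 2) := by
  refine ⟨1 / 12, by norm_num, 3, by norm_num, fun c₃ γ hsmall U hU hsup y hy => ?_⟩
  rcases (add_nonneg (abs_nonneg c₃) (abs_nonneg γ)).eq_or_lt with hzero | hpos
  · have hc₃ : c₃ = 0 := abs_eq_zero.mp (by linarith [abs_nonneg c₃, abs_nonneg γ])
    have hUy : U y = 0 := abs_nonpos_iff.mp (by simpa [← hzero] using hsup y hy)
    rw [← hzero]
    simp [hc₃, hUy]
  · exact hU.abs_add_sign_mul_log_le hpos hsmall hy
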